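/- Let k₁, k₂ be integers with 1 ≤ k₁, k₂ ≤ l − 1. If f is odd, then m^{(k₁)} = g m^{(k₂)} holds if and only if (k₁, k₂) = (1, l − 1). If f is even, then m^{(k₁)} = g m^{(k₂)} holds if and only if (k₁, k₂) is one of (1, l − 1), (l/2 + 1, l/2 − 1), or (l/2, l/2). -/
import Mathlib


open Polynomial

/-- The tuple `μ ∈ (ℤ ± x)^f`:  `μ₀ = x - 1`, `μ₁ = p - 2 - x`, and
`μ_j = p - 1 - x` for `2 ≤ j ≤ f - 1`.  Indices are taken in `ZMod f`. -/
noncomputable def muTuple (p f : ℕ) : ZMod f → Polynomial ℤ := fun j =>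
  if j = 0 then X - 1
  else if j = 1 then C ((p : ℤ) - 2) - X
  else C ((p : ℤ) - 1) - X

/-- `muIter p f k = μ^{(k)} = g^{k-1}μ ∘ ⋯ ∘ gμ ∘ μ`, with `μ^{(0)} = (x, …, x)`;
composition and the cyclic shift `g` (`(gλ)_j = λ_{j+1}`) are componentwise. -/
noncomputable def muIter (p f : ℕ) : ℕ → ZMod f → Polynomial ℤ
  | 0 => fun _ => X
  | k + 1 => fun j => (muTuple p f (j + (k : ZMod f))).comp (muIter p f k j)

/-- `msign p f k = m^{(k)} ∈ (ℤ/2)^f`: the `j`-th entry is `0` iff the leading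
coefficient of `μ^{(k)}_j` is `+1`. -/
noncomputable def msign (p f k : ℕ) (j : ZMod f) : ZMod 2 :=
  if (muIter p f k j).coeff 1 = 1 then 0 else 1

/-- `l = f` if `f` is odd and `l = 2f` if `f` is even. -/
def cycLen (f : ℕ) : ℕ := if Odd f then f else 2 * f

/-! ### Auxiliary combinatorial machinery -/

/-- `indC f k r` counts how many of `r, r + f` are `< k`. -/
def indC (f k r : ℕ) : ℕ := (if r < k then 1 else 0) + (if r + f < k then 1 else 0)

/-- `prr f r` is `r - 1` computed cyclically in `[0, f-1]`. -/
def prr (f r : ℕ) : ℕ := if r = 0 then f - 1 else r - 1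

lemma key_iff (f k₁ k₂ r s : ℕ) :
    (k₁ + indC f k₁ r + (k₂ + indC f k₂ s)) % 2 = 0 ↔
      ((r < k₁ ∧ k₁ ≤ r + f) ↔ ((s < k₂ ∧ k₂ ≤ s + f) ↔ (k₁ + k₂) % 2 = 0)) := by
  unfold indC; split_ifs <;> omega

lemma combo_odd (f k₁ k₂ : ℕ) (hf : 2 ≤ f) (hfo : f % 2 = 1)
    (h1 : 1 ≤ k₁) (h1' : k₁ ≤ f - 1) (h2 : 1 ≤ k₂) (h2' : k₂ ≤ f - 1) :
    (∀ r < f, (k₁ + indC f k₁ r + (k₂ + indC f k₂ (prr f r))) % 2 = 0) ↔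
      (k₁ = 1 ∧ k₂ = f - 1) := by
  have e0 : prr f 0 = f - 1 := by simp [prr]
  have e1 : ∀ r, r ≠ 0 → prr f r = r - 1 := fun r hr => by simp [prr, hr]
  constructor
  · intro H
    have K0 := (key_iff f k₁ k₂ 0 (f - 1)).mp (by have := H 0 (by omega); rwa [e0] at this)
    have K1 := (key_iff f k₁ k₂ 1 0).mp
      (by have := H 1 (by omega); rwa [e1 1 one_ne_zero] at this)
    have hA : min (k₂ + 1) (f - 1) ≠ 0 := by omega
    have KA := (key_iff f k₁ k₂ (min (k₂ + 1) (f - 1)) (min (k₂ + 1) (f - 1) - 1)).mp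
      (by have := H (min (k₂ + 1) (f - 1)) (by omega); rwa [e1 _ hA] at this)
    omega
  · rintro ⟨rfl, rfl⟩ r hr
    rw [key_iff]
    by_cases h0 : r = 0
    · subst h0; rw [e0]; omega
    · rw [e1 r h0]; omega

set_option maxHeartbeats 1000000 in
lemma combo_even (f k₁ k₂ : ℕ) (hf : 2 ≤ f) (hfe : f % 2 = 0)
    (h1 : 1 ≤ k₁) (h1' : k₁ ≤ 2 * f - 1) (h2 : 1 ≤ k₂) (h2' : k₂ ≤ 2 * f - 1) :
    (∀ r < f, (k₁ + indC f k₁ r + (k₂ + indC f k₂ (prr f r))) % 2 = 0) ↔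
      ((k₁ = 1 ∧ k₂ = 2 * f - 1) ∨ (k₁ = f + 1 ∧ k₂ = f - 1) ∨ (k₁ = f ∧ k₂ = f)) := by
  have e0 : prr f 0 = f - 1 := by simp [prr]
  have e1 : ∀ r, r ≠ 0 → prr f r = r - 1 := fun r hr => by simp [prr, hr]
  constructor
  · intro H
    have K0 := (key_iff f k₁ k₂ 0 (f - 1)).mp (by have := H 0 (by omega); rwa [e0] at this)
    have K1 := (key_iff f k₁ k₂ 1 0).mp
      (by have := H 1 (by omega); rwa [e1 1 one_ne_zero] at this)
    have Kf := (key_iff f k₁ k₂ (f - 1) (f - 2)).mp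
      (by have := H (f - 1) (by omega);
          rwa [e1 _ (by omega), show f - 1 - 1 = f - 2 by omega] at this)
    by_cases hc1 : k₂ + 1 < f
    · have KA := (key_iff f k₁ k₂ (k₂ + 1) k₂).mp
        (by have := H (k₂ + 1) hc1;
            rwa [e1 _ (by omega), show k₂ + 1 - 1 = k₂ by omega] at this)
      omega
    · by_cases hc2 : f < k₂ ∧ k₂ + 1 - f < f
      · have KB := (key_iff f k₁ k₂ (k₂ + 1 - f) (k₂ - f)).mp
          (by have := H (k₂ + 1 - f) hc2.2;
              rwa [e1 _ (by omega), show k₂ + 1 - f - 1 = k₂ - f by omega] at this)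
        omega
      · omega
  · rintro (⟨rfl, rfl⟩ | ⟨rfl, rfl⟩ | ⟨rfl, rfl⟩) r hr <;>
    · rw [key_iff]
      rcases eq_or_ne r 0 with h0 | h0
      · rw [h0, e0]; omega
      · rw [e1 r h0]; omega

/-! ### From polynomials to parities -/

lemma muTuple_comp_coeff (p f : ℕ) (i : ZMod f) (q : Polynomial ℤ) :
    ((muTuple p f i).comp q).coeff 1 = (if i = 0 then 1 else -1) * q.coeff 1 := by
  unfold muTuple
  split_ifs with h1 h2 <;>
    simp [sub_comp, X_comp, C_comp, one_comp, coeff_sub, coeff_one, coeff_C]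

lemma coeff1_muIter (p f : ℕ) (k : ℕ) (j : ZMod f) :
    (muIter p f k j).coeff 1 =
      (-1 : ℤ) ^ (((Finset.range k).filter
        (fun t => ¬ (j + (t : ℕ) : ZMod f) = 0)).card) := by
  induction k with
  | zero => simp [muIter]
  | succ k ih =>
    have : muIter p f (k + 1) j = (muTuple p f (j + (k : ZMod f))).comp (muIter p f k j) := rfl
    rw [this, muTuple_comp_coeff, ih, Finset.range_add_one, Finset.filter_insert]
    by_cases h : (j + (k : ℕ) : ZMod f) = 0
    · rw [if_pos h, if_neg (not_not_intro h)]
      simp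
    · rw [if_neg h, if_pos h, Finset.card_insert_of_notMem (by simp), pow_succ]
      ring

lemma card_eq_indC (f : ℕ) (hf : 2 ≤ f) (k : ℕ) (hk : k ≤ 2 * f) (j : ZMod f) :
    ((Finset.range k).filter (fun t => ((j + (t : ℕ)) : ZMod f) = 0)).card
      = indC f k ((-j).val) := by
  haveI : NeZero f := ⟨by omega⟩
  set v := (-j).val with hv
  have hvf : v < f := ZMod.val_lt _
  have hcast : ((v : ℕ) : ZMod f) = -j := ZMod.natCast_rightInverse (-j)
  have hmem : ∀ t ∈ Finset.range k,
      (((j + (t : ℕ)) : ZMod f) = 0 ↔ (t = v ∨ t = v + f)) := by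
    intro t ht
    have htk : t < 2 * f := lt_of_lt_of_le (Finset.mem_range.mp ht) hk
    have h1 : ((j + (t : ℕ)) : ZMod f) = 0 ↔ ((t : ℕ) : ZMod f) = -j := by
      constructor
      · intro h; linear_combination h
      · intro h; rw [h]; ring
    rw [h1, ← hcast, ZMod.natCast_eq_natCast_iff]
    unfold Nat.ModEq
    rw [Nat.mod_eq_of_lt hvf]
    constructor
    · intro h
      rcases lt_or_ge t f with h2 | h2
      · left; rwa [Nat.mod_eq_of_lt h2] at h
      · right
        rw [Nat.mod_eq_sub_mod h2, Nat.mod_eq_of_lt (by omega)] at h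
        omega
    · rintro (rfl | rfl)
      · exact Nat.mod_eq_of_lt hvf
      · rw [Nat.add_mod_right]; exact Nat.mod_eq_of_lt hvf
  rw [Finset.filter_congr hmem, Finset.filter_or, Finset.filter_eq', Finset.filter_eq',
    Finset.card_union_of_disjoint]
  · simp only [Finset.mem_range, indC]
    split_ifs <;> simp
  · split_ifs <;> simp <;> omega

lemma msign_eq_card (p f k : ℕ) (j : ZMod f) :
    msign p f k j = (((Finset.range k).filter
      (fun t => ¬ ((j + (t : ℕ)) : ZMod f) = 0)).card : ZMod 2) := by
  unfold msign
  rw [coeff1_muIter]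
  set c := ((Finset.range k).filter (fun t => ¬ ((j + (t : ℕ)) : ZMod f) = 0)).card with hc
  rcases Nat.even_or_odd c with h | h
  · rw [h.neg_one_pow, if_pos rfl, ← ZMod.natCast_mod c 2, Nat.even_iff.mp h]
    rfl
  · rw [h.neg_one_pow, if_neg (by norm_num), ← ZMod.natCast_mod c 2, Nat.odd_iff.mp h]
    rfl

lemma msign_val (p f : ℕ) (hf : 2 ≤ f) (k : ℕ) (hk : k ≤ 2 * f) (j : ZMod f) :
    msign p f k j = ((k + indC f k ((-j).val) : ℕ) : ZMod 2) := by
  rw [msign_eq_card]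
  have h1 := Finset.card_filter_add_card_filter_not
    (s := Finset.range k) (p := fun t => ((j + (t : ℕ)) : ZMod f) = 0)
  rw [Finset.card_range, card_eq_indC f hf k hk j] at h1
  have h2 : k + indC f k ((-j).val) =
      ((Finset.range k).filter (fun t => ¬ ((j + (t : ℕ)) : ZMod f) = 0)).card
        + 2 * indC f k ((-j).val) := by omega
  rw [h2, Nat.cast_add, Nat.cast_mul, show ((2 : ℕ) : ZMod 2) = 0 from rfl, zero_mul,
    add_zero]

lemma val_sub_one (f : ℕ) (hf : 2 ≤ f) (r : ℕ) (hr : r < f) :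
    haveI : NeZero f := ⟨by omega⟩
    ((r : ZMod f) - 1).val = prr f r := by
  haveI : NeZero f := ⟨by omega⟩
  rcases eq_or_ne r 0 with rfl | h0
  · have h1 : ((0 : ℕ) : ZMod f) - 1 = ((f - 1 : ℕ) : ZMod f) := by
      rw [Nat.cast_sub (by omega), ZMod.natCast_self]
      push_cast
      ring
    rw [h1, ZMod.val_cast_of_lt (by omega)]
    simp [prr]
  · have h1 : ((r : ℕ) : ZMod f) - 1 = ((r - 1 : ℕ) : ZMod f) := by
      rw [Nat.cast_sub (by omega)]
      push_cast
      ring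
    rw [h1, ZMod.val_cast_of_lt (by omega)]
    simp [prr, h0]

lemma cond_iff (p f : ℕ) (hf : 2 ≤ f) (k₁ k₂ : ℕ) (hk1 : k₁ ≤ 2 * f) (hk2 : k₂ ≤ 2 * f) :
    (∀ j : ZMod f, msign p f k₁ j = msign p f k₂ (j + 1)) ↔
      (∀ r < f, (k₁ + indC f k₁ r + (k₂ + indC f k₂ (prr f r))) % 2 = 0) := by
  haveI : NeZero f := ⟨by omega⟩
  constructor
  · intro H r hr
    have h := H (-(r : ZMod f))
    rw [msign_val p f hf k₁ hk1, msign_val p f hf k₂ hk2] at h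
    have e1 : (-(-(r : ZMod f))).val = r := by rw [neg_neg, ZMod.val_cast_of_lt hr]
    have e2 : (-(-(r : ZMod f) + 1)).val = prr f r := by
      rw [show -(-(r : ZMod f) + 1) = (r : ZMod f) - 1 by ring]
      exact val_sub_one f hf r hr
    rw [e1, e2] at h
    have := (ZMod.natCast_eq_natCast_iff _ _ _).mp h
    unfold Nat.ModEq at this
    omega
  · intro H j
    set r := (-j).val with hrdef
    have hrf : r < f := ZMod.val_lt _
    have h := H r hrf
    rw [msign_val p f hf k₁ hk1, msign_val p f hf k₂ hk2]
    have hj : ((r : ℕ) : ZMod f) = -j := ZMod.natCast_rightInverse (-j)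
    have e2 : (-(j + 1)).val = prr f r := by
      rw [show -(j + 1) = -j - 1 by ring, ← hj]
      exact val_sub_one f hf r hrf
    rw [← hrdef, e2]
    rw [ZMod.natCast_eq_natCast_iff]
    unfold Nat.ModEq
    omega

/-- The pairs `(k₁, k₂)` with `1 ≤ k₁, k₂ ≤ l - 1` satisfying `m^{(k₁)} = g m^{(k₂)}`:
only `(1, l-1)` when `f` is odd, and only `(1, l-1)`, `(l/2+1, l/2-1)`, `(l/2, l/2)`
when `f` is even. -/
theorem msign_eq_shift_one_iff (p f : ℕ) (hp : p.Prime) (hp3 : 3 < p) (hf : 1 < f)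
    (k₁ k₂ : ℕ) (hk₁ : 1 ≤ k₁) (hk₁' : k₁ ≤ cycLen f - 1)
    (hk₂ : 1 ≤ k₂) (hk₂' : k₂ ≤ cycLen f - 1) :
    (Odd f →
      ((∀ j : ZMod f, msign p f k₁ j = msign p f k₂ (j + 1)) ↔
        (k₁ = 1 ∧ k₂ = cycLen f - 1))) ∧
    (Even f →
      ((∀ j : ZMod f, msign p f k₁ j = msign p f k₂ (j + 1)) ↔
        ((k₁ = 1 ∧ k₂ = cycLen f - 1) ∨
         (k₁ = cycLen f / 2 + 1 ∧ k₂ = cycLen f / 2 - 1) ∨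
         (k₁ = cycLen f / 2 ∧ k₂ = cycLen f / 2)))) := by
  have hf2 : 2 ≤ f := hf
  constructor
  · intro hodd
    have hfo : f % 2 = 1 := Nat.odd_iff.mp hodd
    have hl : cycLen f = f := by unfold cycLen; rw [if_pos hodd]
    rw [hl] at hk₁' hk₂' ⊢
    rw [cond_iff p f hf2 k₁ k₂ (by omega) (by omega)]
    exact combo_odd f k₁ k₂ hf2 hfo hk₁ hk₁' hk₂ hk₂'
  · intro heven
    have hfe : f % 2 = 0 := Nat.even_iff.mp heven
    have hl : cycLen f = 2 * f := by
      unfold cycLen; rw [if_neg (Nat.not_odd_iff_even.mpr heven)]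
    rw [hl] at hk₁' hk₂' ⊢
    rw [cond_iff p f hf2 k₁ k₂ (by omega) (by omega),
      combo_even f k₁ k₂ hf2 hfe hk₁ hk₁' hk₂ hk₂',
      show 2 * f / 2 = f by omega]
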